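/- Let φ : ℝ → (0,1) solve the nonlocal traveling wave equation ∫_ℝ J₁(z−y)[φ(y)−φ(z)]dy − cφ'(z) + f(φ(z)) = 0 with c > 0, φ(−∞)=0, φ(+∞)=1, where f satisfies (F) and J₁ is the one-dimensional marginal of J. Then for each t₀ and each ε ∈ (0, η) (η small so that f' ≤ −ω on [−2η,2η] ∪ [1−2η,1+2η]), the function ū(x,t) = φ(x₁ + ct + 2ε‖f'‖δ⁻¹ω⁻¹(1 − e^{−ω(t−t₀)})) + εe^{−ω(t−t₀)} is a super-solution of u_t = ∫_{ℝ^N} J(x−y)[u(y,t)−u(x,t)]dy + f(u) on ℝ^N × [t₀,∞), where δ = min_{[−A,A]} φ' and A is chosen so that φ ≤ η/2 on (−∞,−A] and φ ≥ 1−η/2 on [A,∞), and f has been extended linearly outside [0,1] by f(s)=f'(0)s for s≤0, f(s)=f'(1)(s−1) for s≥1. -/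

import Mathlib

open MeasureTheory Set Real

/-! The nonlocal operator applied to a planar profile `φ (x₁ + a)` reduces, through the
marginal `J₁`, to the one-dimensional operator, so the wave equation leaves only
`f (φ ξ + ε e^{-ω(t-t₀)}) - f (φ ξ)` to control. By the mean value theorem it suffices that
`f' ≤ 2 ‖f'‖ δ⁻¹ φ' ξ - ω` between `φ ξ` and `φ ξ + ε`: on `[-A, A]` because `φ' ≥ δ` there,
outside because `φ` is then within `η/2 + ε < 2η` of a zero of `f` where `f' ≤ -ω`, provided
`φ' ≥ 0`. Monotonicity of `φ` comes from differentiating the wave equation: `φ'` tends to `0` at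
`±∞`, and at a negative global minimum of `φ'` the relation `c φ'' = J₁ ∗ φ' - φ' + f'(φ) φ'` forces
`f'(φ) ≥ 0`, which fails both on `[-A, A]` (where `φ' ≥ δ > 0`) and outside it. -/

open Filter Topology

instance MeasureTheory.Measure.prod.instIsNegInvariant {G H : Type*} [MeasurableSpace G]
    [MeasurableSpace H] [Neg G] [Neg H] [MeasurableNeg G] [MeasurableNeg H] (μ : Measure G)
    (ν : Measure H) [SFinite μ] [SFinite ν] [μ.IsNegInvariant] [ν.IsNegInvariant] :
    (μ.prod ν).IsNegInvariant where
  neg_eq_self := by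
    change (μ.prod ν).map (Prod.map Neg.neg Neg.neg) = _
    rw [← Measure.map_prod_map _ _ measurable_neg measurable_neg, Measure.map_neg_eq_self,
      Measure.map_neg_eq_self]

instance (k : ℕ) : (volume : Measure (ℝ × (Fin k → ℝ))).IsAddLeftInvariant :=
  Measure.prod.instIsAddLeftInvariant

instance (k : ℕ) : (volume : Measure (ℝ × (Fin k → ℝ))).IsNegInvariant :=
  Measure.prod.instIsNegInvariant _ _

section Kernel

variable {K g : ℝ → ℝ} {C : ℝ}

lemma norm_mul_comp_sub_le (hgC : ∀ y, |g y| ≤ C) (z u : ℝ) : ‖K u * g (z - u)‖ ≤ |K u| * C := by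
  rw [norm_mul, Real.norm_eq_abs, Real.norm_eq_abs]
  exact mul_le_mul_of_nonneg_left (hgC _) (abs_nonneg _)

lemma integrable_mul_comp_sub (hK : Integrable K) (hg : Measurable g) (hgC : ∀ y, |g y| ≤ C)
    (z : ℝ) : Integrable fun u ↦ K u * g (z - u) :=
  hK.mul_bdd (hg.comp (measurable_const.sub measurable_id)).aestronglyMeasurable
    (ae_of_all _ fun u ↦ hgC (z - u))

lemma integral_comp_sub_mul_sub_eq (hK : Integrable K) (hKone : ∫ u, K u = 1) (hg : Measurable g)
    (hgC : ∀ y, |g y| ≤ C) (z : ℝ) :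
    ∫ y, K (z - y) * (g y - g z) = (∫ u, K u * g (z - u)) - g z := by
  have hint : Integrable fun y ↦ K (z - y) * g y := by
    simpa using (integrable_mul_comp_sub hK hg hgC z).comp_sub_left z
  simp_rw [mul_sub]
  rw [integral_sub hint ((hK.comp_sub_left z).mul_const _), integral_mul_const,
    integral_sub_left_eq_self K volume z, hKone, one_mul,
    ← integral_sub_left_eq_self (fun u ↦ K u * g (z - u)) volume z]
  simp only [sub_sub_cancel]

lemma hasDerivAt_integral_mul_comp_sub {g' : ℝ → ℝ} {M : ℝ} (hK : Integrable K)
    (hgC : ∀ y, |g y| ≤ C) (hg : ∀ y, HasDerivAt g (g' y) y) (hg'M : ∀ y, |g' y| ≤ M) (z : ℝ) :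
    HasDerivAt (fun w ↦ ∫ u, K u * g (w - u)) (∫ u, K u * g' (z - u)) z := by
  have hgm : Measurable g := (continuous_iff_continuousAt.2 fun y ↦ (hg y).continuousAt).measurable
  have hg'm : Measurable g' := by
    rw [show g' = deriv g from funext fun y ↦ (hg y).deriv.symm]
    exact measurable_deriv g
  refine (hasDerivAt_integral_of_dominated_loc_of_deriv_le (bound := fun u ↦ |K u| * M)
    (F' := fun w u ↦ K u * g' (w - u))
    univ_mem (Eventually.of_forall fun w ↦ (integrable_mul_comp_sub hK hgm hgC w).1)
    (integrable_mul_comp_sub hK hgm hgC z)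
    (integrable_mul_comp_sub hK hg'm hg'M z).1
    (ae_of_all _ fun u w _ ↦ norm_mul_comp_sub_le hg'M w u) (hK.abs.mul_const M)
    (ae_of_all _ fun u w _ ↦ ?_)).2
  simpa using ((hg (w - u)).comp w ((hasDerivAt_id w).sub_const u)).const_mul (K u)

lemma tendsto_integral_mul_comp_sub {l : Filter ℝ} [l.IsCountablyGenerated] {L : ℝ}
    (hK : Integrable K) (hg : Measurable g) (hgC : ∀ y, |g y| ≤ C)
    (hlim : ∀ u, Tendsto (fun w ↦ g (w - u)) l (𝓝 L)) :
    Tendsto (fun w ↦ ∫ u, K u * g (w - u)) l (𝓝 ((∫ u, K u) * L)) := by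
  rw [← integral_mul_const]
  exact tendsto_integral_filter_of_dominated_convergence (fun u ↦ |K u| * C)
    (Eventually.of_forall fun w ↦ (integrable_mul_comp_sub hK hg hgC w).1)
    (Eventually.of_forall fun w ↦ ae_of_all _ (norm_mul_comp_sub_le hgC w)) (hK.abs.mul_const C)
    (ae_of_all _ fun u ↦ (hlim u).const_mul (K u))

lemma le_integral_mul_comp_sub_of_forall_le {z : ℝ} (hK : Integrable K) (hK0 : ∀ u, 0 ≤ K u)
    (hKone : ∫ u, K u = 1) (hint : Integrable fun u ↦ K u * g (z - u)) (hmin : ∀ y, g z ≤ g y) :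
    g z ≤ ∫ u, K u * g (z - u) := by
  calc g z = ∫ u, K u * g z := by rw [integral_mul_const, hKone, one_mul]
    _ ≤ ∫ u, K u * g (z - u) :=
      integral_mono (hK.mul_const _) hint fun u ↦ mul_le_mul_of_nonneg_left (hmin _) (hK0 u)

end Kernel

lemma Continuous.exists_forall_le_of_tendsto_cocompact_zero {β : Type*} [TopologicalSpace β]
    {ψ : β → ℝ} (hψ : Continuous ψ) (hψ0 : Tendsto ψ (cocompact β) (𝓝 0)) {z₀ : β}
    (hz₀ : ψ z₀ < 0) : ∃ z, ψ z < 0 ∧ ∀ y, ψ z ≤ ψ y := by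
  obtain ⟨z, hz⟩ := hψ.exists_forall_le' z₀
    ((hψ0.eventually (eventually_gt_nhds hz₀)).mono fun _ h ↦ h.le)
  exact ⟨z, (hz z₀).trans_lt hz₀, hz⟩

section TravelingWave

variable {K f f' φ φ' : ℝ → ℝ} {c C : ℝ}

lemma deriv_eq_of_wave (hK : Integrable K) (hKone : ∫ u, K u = 1)
    (hφ : ∀ z, HasDerivAt φ (φ' z) z) (hφC : ∀ z, |φ z| ≤ C) (hc : c ≠ 0)
    (hwave : ∀ z, (∫ y, K (z - y) * (φ y - φ z)) - c * φ' z + f (φ z) = 0) (z : ℝ) :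
    φ' z = ((∫ u, K u * φ (z - u)) - φ z + f (φ z)) / c := by
  have hφm : Measurable φ := (continuous_iff_continuousAt.2 fun z ↦ (hφ z).continuousAt).measurable
  have := hwave z
  rw [integral_comp_sub_mul_sub_eq hK hKone hφm hφC] at this
  rw [eq_div_iff hc]
  linarith

lemma exists_abs_deriv_le_of_wave (hK : Integrable K) (hKone : ∫ u, K u = 1) (hf : Continuous f)
    (hφ : ∀ z, HasDerivAt φ (φ' z) z) (hφC : ∀ z, |φ z| ≤ C) (hc : c ≠ 0)
    (hwave : ∀ z, (∫ y, K (z - y) * (φ y - φ z)) - c * φ' z + f (φ z) = 0) :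
    ∃ M, ∀ z, |φ' z| ≤ M := by
  obtain ⟨Mf, hMf⟩ := isCompact_Icc.exists_bound_of_continuousOn (s := Icc (-C) C) hf.continuousOn
  refine ⟨((∫ u, |K u|) * C + C + Mf) / |c|, fun z ↦ ?_⟩
  have hconv : |∫ u, K u * φ (z - u)| ≤ (∫ u, |K u|) * C :=
    (norm_integral_le_of_norm_le (hK.abs.mul_const C)
      (ae_of_all _ (norm_mul_comp_sub_le hφC z))).trans_eq (integral_mul_const C _)
  have hfφ : |f (φ z)| ≤ Mf := hMf _ (abs_le.1 (hφC z))
  rw [deriv_eq_of_wave hK hKone hφ hφC hc hwave, abs_div,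
    div_le_div_iff_of_pos_right (abs_pos.2 hc)]
  have := hφC z
  rw [abs_le] at hconv hfφ this ⊢
  constructor <;> linarith

lemma hasDerivAt_deriv_of_wave (hK : Integrable K) (hKone : ∫ u, K u = 1)
    (hf : ∀ s, HasDerivAt f (f' s) s) (hφ : ∀ z, HasDerivAt φ (φ' z) z) (hφC : ∀ z, |φ z| ≤ C)
    (hc : c ≠ 0) (hwave : ∀ z, (∫ y, K (z - y) * (φ y - φ z)) - c * φ' z + f (φ z) = 0)
    (z : ℝ) :
    HasDerivAt φ' (((∫ u, K u * φ' (z - u)) - φ' z + f' (φ z) * φ' z) / c) z := by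
  obtain ⟨M, hM⟩ := exists_abs_deriv_le_of_wave hK hKone
    (continuous_iff_continuousAt.2 fun s ↦ (hf s).continuousAt) hφ hφC hc hwave
  exact ((((hasDerivAt_integral_mul_comp_sub hK hφC hφ hM z).sub (hφ z)).add
    ((hf (φ z)).comp z (hφ z))).div_const c).congr_of_eventuallyEq
    (Eventually.of_forall (deriv_eq_of_wave hK hKone hφ hφC hc hwave))

lemma tendsto_deriv_of_wave {l : Filter ℝ} [l.IsCountablyGenerated] {a : ℝ} (hK : Integrable K)
    (hKone : ∫ u, K u = 1) (hf : Continuous f) (hφ : ∀ z, HasDerivAt φ (φ' z) z)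
    (hφC : ∀ z, |φ z| ≤ C) (hc : c ≠ 0)
    (hwave : ∀ z, (∫ y, K (z - y) * (φ y - φ z)) - c * φ' z + f (φ z) = 0)
    (hφa : Tendsto φ l (𝓝 a)) (hfa : f a = 0) (hl : ∀ u, Tendsto (fun w ↦ w - u) l l) :
    Tendsto φ' l (𝓝 0) := by
  have hφm : Measurable φ := (continuous_iff_continuousAt.2 fun z ↦ (hφ z).continuousAt).measurable
  have hconv := tendsto_integral_mul_comp_sub hK hφm hφC fun u ↦ hφa.comp (hl u)
  rw [hKone, one_mul] at hconv
  rw [funext (deriv_eq_of_wave hK hKone hφ hφC hc hwave)]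
  simpa [hfa] using ((hconv.sub hφa).add ((hf.tendsto a).comp hφa)).div_const c

lemma deriv_nonneg_of_wave {a b : ℝ} (hK : Integrable K) (hK0 : ∀ u, 0 ≤ K u)
    (hKone : ∫ u, K u = 1) (hf : ∀ s, HasDerivAt f (f' s) s) (hφ : ∀ z, HasDerivAt φ (φ' z) z)
    (hφC : ∀ z, |φ z| ≤ C) (hc : c ≠ 0)
    (hwave : ∀ z, (∫ y, K (z - y) * (φ y - φ z)) - c * φ' z + f (φ z) = 0)
    (hφa : Tendsto φ atBot (𝓝 a)) (hfa : f a = 0) (hφb : Tendsto φ atTop (𝓝 b)) (hfb : f b = 0)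
    (hneg : ∀ z, φ' z < 0 → f' (φ z) < 0) (z : ℝ) : 0 ≤ φ' z := by
  by_contra! hz
  have hfc : Continuous f := continuous_iff_continuousAt.2 fun s ↦ (hf s).continuousAt
  have hφ'' := hasDerivAt_deriv_of_wave hK hKone hf hφ hφC hc hwave
  have hφ'c : Continuous φ' := continuous_iff_continuousAt.2 fun z ↦ (hφ'' z).continuousAt
  have hφ'0 : Tendsto φ' (cocompact ℝ) (𝓝 0) := by
    rw [cocompact_eq_atBot_atTop, tendsto_sup]
    exact ⟨tendsto_deriv_of_wave hK hKone hfc hφ hφC hc hwave hφa hfa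
        fun u ↦ tendsto_atBot_add_const_right _ (-u) tendsto_id,
      tendsto_deriv_of_wave hK hKone hfc hφ hφC hc hwave hφb hfb
        fun u ↦ tendsto_atTop_add_const_right _ (-u) tendsto_id⟩
  obtain ⟨zm, hzm, hmin⟩ := hφ'c.exists_forall_le_of_tendsto_cocompact_zero hφ'0 hz
  -- at a minimum of `φ'` the differentiated wave equation forces `f' (φ zm) * φ' zm ≤ 0`
  have hzm_min : IsLocalMin φ' zm := Eventually.of_forall hmin
  have hcrit := hzm_min.hasDerivAt_eq_zero (hφ'' zm)
  obtain ⟨M, hM⟩ := exists_abs_deriv_le_of_wave hK hKone hfc hφ hφC hc hwave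
  have hconv := le_integral_mul_comp_sub_of_forall_le hK hK0 hKone
    (integrable_mul_comp_sub hK hφ'c.measurable hM zm) hmin
  rw [div_eq_zero_iff, or_iff_left hc] at hcrit
  nlinarith [hneg zm hzm]

end TravelingWave

lemma integral_prod_mul_comp_fst {α β : Type*} [MeasurableSpace α] [MeasurableSpace β]
    {μ : Measure α} {ν : Measure β} [SFinite μ] [SFinite ν] {J : α × β → ℝ} {g : α → ℝ} {C : ℝ}
    (hJ : Integrable J (μ.prod ν)) (hg : Measurable g) (hgC : ∀ s, |g s| ≤ C) :
    ∫ p, J p * g p.1 ∂(μ.prod ν) = ∫ s, (∫ t, J (s, t) ∂ν) * g s ∂μ := by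
  have hint : Integrable (fun p ↦ J p * g p.1) (μ.prod ν) :=
    hJ.mul_bdd (hg.comp measurable_fst).aestronglyMeasurable (ae_of_all _ fun p ↦ hgC p.1)
  rw [integral_prod _ hint]
  simp_rw [integral_mul_const]

lemma integral_mul_comp_fst_eq_marginal {k : ℕ} {J : ℝ × (Fin k → ℝ) → ℝ} {g : ℝ → ℝ} {C : ℝ}
    (hJ : Integrable J) (hg : Measurable g) (hgC : ∀ s, |g s| ≤ C) (x : ℝ × (Fin k → ℝ)) :
    ∫ y, J (x - y) * g y.1 = ∫ s, (∫ t, J (x.1 - s, t)) * g s := by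
  calc ∫ y, J (x - y) * g y.1 = ∫ y, J y * g (x.1 - y.1) := by
        rw [← integral_sub_left_eq_self _ volume x]
        simp only [sub_sub_cancel, Prod.fst_sub]
    _ = ∫ s, (∫ t, J (s, t)) * g (x.1 - s) := by
        rw [Measure.volume_eq_prod] at hJ ⊢
        exact integral_prod_mul_comp_fst hJ (hg.comp (measurable_const.sub measurable_id))
          fun s ↦ hgC _
    _ = ∫ s, (∫ t, J (x.1 - s, t)) * g s := by
        rw [← integral_sub_left_eq_self _ volume x.1]
        simp only [sub_sub_cancel]

lemma integral_planar_eq_marginal {k : ℕ} {J : ℝ × (Fin k → ℝ) → ℝ} {J1 φ : ℝ → ℝ} {C : ℝ}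
    (hJ : Integrable J) (hJ1 : ∀ z, J1 z = ∫ y' : Fin k → ℝ, J (z, y')) (hφ : Continuous φ)
    (hφC : ∀ z, |φ z| ≤ C) (x : ℝ × (Fin k → ℝ)) (a : ℝ) :
    ∫ y, J (x - y) * (φ (y.1 + a) - φ (x.1 + a)) = ∫ y, J1 (x.1 + a - y) * (φ y - φ (x.1 + a)) := by
  have hg : Measurable fun s ↦ φ (s + a) - φ (x.1 + a) :=
    (hφ.comp (continuous_add_const a)).measurable.sub_const _
  rw [integral_mul_comp_fst_eq_marginal hJ hg (C := C + C) (fun s ↦ (abs_sub _ _).trans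
    (add_le_add (hφC _) (hφC _))),
    ← integral_add_right_eq_self (fun y ↦ J1 (x.1 + a - y) * (φ y - φ (x.1 + a))) a]
  simp only [hJ1, add_sub_add_right_eq_sub]

lemma marginal_integrable_nonneg_integral {F : Type*} [MeasurableSpace F] {ν : Measure F}
    [SFinite ν] {J : ℝ × F → ℝ} (hJ : Integrable J (volume.prod ν)) (hJ0 : ∀ p, 0 ≤ J p) :
    Integrable (fun s ↦ ∫ t, J (s, t) ∂ν) ∧ (∀ s, 0 ≤ ∫ t, J (s, t) ∂ν) ∧
      ∫ s, ∫ t, J (s, t) ∂ν = ∫ p, J p ∂(volume.prod ν) :=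
  ⟨hJ.integral_prod_left, fun _ ↦ integral_nonneg fun _ ↦ hJ0 _, (integral_prod _ hJ).symm⟩

lemma sub_le_mul_sub_of_hasDerivAt_le {f f' : ℝ → ℝ} {a b C : ℝ}
    (hf : ∀ s, HasDerivAt f (f' s) s) (hab : a ≤ b) (hC : ∀ s ∈ Icc a b, f' s ≤ C) :
    f b - f a ≤ C * (b - a) :=
  (convex_Icc a b).image_sub_le_mul_sub_of_deriv_le
    (continuous_iff_continuousAt.2 fun s ↦ (hf s).continuousAt).continuousOn
    (fun s _ ↦ (hf s).differentiableAt.differentiableWithinAt)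
    (fun s hs ↦ (hf s).deriv ▸ hC s (interior_subset hs))
    a (left_mem_Icc.2 hab) b (right_mem_Icc.2 hab) hab

section Bistable

variable {f' φ φ' : ℝ → ℝ} {ω η A : ℝ}

lemma le_neg_of_notMem_Icc
    (hf'neg : ∀ s ∈ Icc (-2*η) (2*η) ∪ Icc (1-2*η) (1+2*η), f' s ≤ -ω)
    (hφ : ∀ z, 0 < φ z ∧ φ z < 1) (hleft : ∀ z ≤ -A, φ z ≤ η/2)
    (hright : ∀ z ≥ A, φ z ≥ 1 - η/2) {z s : ℝ} (hz : z ∉ Icc (-A) A)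
    (hs : s ∈ Icc (φ z) (φ z + η)) : f' s ≤ -ω := by
  obtain ⟨hs₁, hs₂⟩ := hs
  apply hf'neg
  rcases not_and_or.1 hz with h | h
  · have := hleft z (not_le.1 h).le
    exact Or.inl ⟨by linarith [(hφ z).1], by linarith⟩
  · have := hright z (not_le.1 h).le
    exact Or.inr ⟨by linarith, by linarith [(hφ z).2]⟩

lemma le_two_mul_inv_mul_sub_of_mem_Icc {δ Kf : ℝ}
    (hfar : ∀ z ∉ Icc (-A) A, ∀ s ∈ Icc (φ z) (φ z + η), f' s ≤ -ω)
    (hδ : ∀ z ∈ Icc (-A) A, δ ≤ φ' z) (hδpos : 0 < δ) (hφ'0 : ∀ z, 0 ≤ φ' z)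
    (hKf : ∀ s, |f' s| ≤ Kf) (hωKf : ω ≤ Kf) {z s : ℝ} (hs : s ∈ Icc (φ z) (φ z + η)) :
    f' s ≤ 2*Kf*δ⁻¹*φ' z - ω := by
  have hKf0 : 0 ≤ Kf := (abs_nonneg _).trans (hKf s)
  by_cases hz : z ∈ Icc (-A) A
  · have h1 : 1 ≤ δ⁻¹ * φ' z := by
      rw [le_inv_mul_iff₀ hδpos, mul_one]; exact hδ z hz
    nlinarith [(abs_le.1 (hKf s)).2, mul_le_mul_of_nonneg_left h1 hKf0]
  · have h1 := hfar z hz s hs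
    have h2 : 0 ≤ 2*Kf*δ⁻¹*φ' z := mul_nonneg (by positivity) (hφ'0 z)
    linarith

end Bistable

theorem stmt_14_general {k : ℕ}
    (J : ℝ × (Fin k → ℝ) → ℝ) (hJpos : ∀ x, 0 ≤ J x)
    (hJC1 : ContDiff ℝ 1 J) (hJsupp : HasCompactSupport J)
    (hJint : ∫ x, J x = 1)
    (J1 : ℝ → ℝ) (hJ1 : ∀ z, J1 z = ∫ y' : Fin k → ℝ, J (z, y'))
    (f f' : ℝ → ℝ) (hf : ∀ s, HasDerivAt f (f' s) s)
    (hfext0 : ∀ s ≤ (0:ℝ), f s = f' 0 * s)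
    (hfext1 : ∀ s ≥ (1:ℝ), f s = f' 1 * (s - 1))
    (phi phi' : ℝ → ℝ) (hphi : ∀ z, HasDerivAt phi (phi' z) z)
    (c : ℝ) (hc : 0 < c)
    (hwave : ∀ z, (∫ y, J1 (z - y) * (phi y - phi z)) - c * phi' z + f (phi z) = 0)
    (hphi0 : Filter.Tendsto phi Filter.atBot (nhds 0))
    (hphi1 : Filter.Tendsto phi Filter.atTop (nhds 1))
    (hphirange : ∀ z, 0 < phi z ∧ phi z < 1)
    (omega eta : ℝ) (homega : 0 < omega)
    (hf'neg : ∀ s ∈ Icc (-2*eta) (2*eta) ∪ Icc (1-2*eta) (1+2*eta), f' s ≤ -omega)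
    (A : ℝ)
    (hAleft : ∀ z ≤ -A, phi z ≤ eta/2) (hAright : ∀ z ≥ A, phi z ≥ 1 - eta/2)
    (delta : ℝ) (hdelta : IsLeast (phi' '' Icc (-A) A) delta) (hdeltapos : 0 < delta)
    (Kf : ℝ) (hKf : ∀ s, |f' s| ≤ Kf)
    (t0 eps : ℝ) (heps : 0 < eps) (heps' : eps < eta)
    (ubar : ℝ × (Fin k → ℝ) → ℝ → ℝ)
    (hubar : ∀ x t, ubar x t =
      phi (x.1 + c*t + 2*eps*Kf*delta⁻¹*omega⁻¹*(1 - Real.exp (-omega*(t - t0))))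
        + eps * Real.exp (-omega*(t - t0))) :
    ∀ x : ℝ × (Fin k → ℝ), ∀ t ≥ t0,
      phi' (x.1 + c*t + 2*eps*Kf*delta⁻¹*omega⁻¹*(1 - Real.exp (-omega*(t - t0))))
          * (c + 2*eps*Kf*delta⁻¹ * Real.exp (-omega*(t - t0)))
        - eps*omega*Real.exp (-omega*(t - t0))
      ≥ (∫ y, J (x - y) * (ubar y t - ubar x t)) + f (ubar x t) := by
  intro x t ht
  have hE0 : 0 < Real.exp (-omega*(t - t0)) := Real.exp_pos _
  have hE1 : Real.exp (-omega*(t - t0)) ≤ 1 := Real.exp_le_one_iff.2 (by nlinarith)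
  simp only [hubar, add_sub_add_right_eq_sub]
  generalize Real.exp (-omega*(t - t0)) = E at hE0 hE1 ⊢
  generalize 2*eps*Kf*delta⁻¹*omega⁻¹*(1 - E) = S
  have hφC : ∀ z, |phi z| ≤ 1 := fun z ↦
    abs_le.2 ⟨by linarith [(hphirange z).1], (hphirange z).2.le⟩
  have hJ : Integrable J := hJC1.continuous.integrable_of_hasCompactSupport hJsupp
  have hflux := integral_planar_eq_marginal hJ hJ1
    (continuous_iff_continuousAt.2 fun z ↦ (hphi z).continuousAt) hφC x (c*t + S)
  simp only [← add_assoc] at hflux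
  rw [ge_iff_le, hflux]
  set ξ := x.1 + c*t + S
  rw [Measure.volume_eq_prod] at hJ hJint
  obtain ⟨hJ1i, hJ1nn, hJ1one⟩ := marginal_integrable_nonneg_integral hJ hJpos
  simp only [← hJ1, hJint] at hJ1i hJ1nn hJ1one
  have hfar : ∀ z ∉ Icc (-A) A, ∀ s ∈ Icc (phi z) (phi z + eta), f' s ≤ -omega :=
    fun _ hz _ hs ↦ le_neg_of_notMem_Icc hf'neg hphirange hAleft hAright hz hs
  have hδ : ∀ z ∈ Icc (-A) A, delta ≤ phi' z := fun z hz ↦ hdelta.2 ⟨z, hz, rfl⟩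
  have hmono : ∀ z, 0 ≤ phi' z :=
    deriv_nonneg_of_wave hJ1i hJ1nn hJ1one hf hphi hφC hc.ne' hwave hphi0
      (by simpa using hfext0 0 le_rfl) hphi1 (by simpa using hfext1 1 le_rfl) fun z hz ↦
        (hfar z (fun hzA ↦ hz.not_ge (hdeltapos.le.trans (hδ z hzA))) (phi z)
          ⟨le_rfl, by linarith⟩).trans_lt (neg_lt_zero.2 homega)
  have hωKf : omega ≤ Kf := by
    linarith [(abs_le.1 (hKf 0)).1, hf'neg 0 (Or.inl ⟨by linarith, by linarith⟩)]
  -- with the wave equation at `ξ`, the claim is `f (φ ξ + εE) - f (φ ξ) ≤ (2 Kf δ⁻¹ φ' ξ - ω) εE`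
  have hincr := sub_le_mul_sub_of_hasDerivAt_le (b := phi ξ + eps*E) hf
    (le_add_of_nonneg_right (by positivity))
    fun s hs ↦ le_two_mul_inv_mul_sub_of_mem_Icc hfar hδ hdeltapos hmono hKf hωKf
      ⟨hs.1, hs.2.trans (by nlinarith)⟩
  linear_combination hincr + hwave ξ

/-- Lemma 4.2 (super-solution half): with f extended linearly outside [0,1],
η small so that f' ≤ −ω near 0 and 1, A chosen so that φ is within η/2 of its limits
outside [−A,A], and δ a positive lower bound (the minimum) of φ' on [−A,A],
the function ū(x,t) = φ(x₁ + ct + 2ε‖f'‖δ⁻¹ω⁻¹(1 − e^{−ω(t−t₀)})) + εe^{−ω(t−t₀)}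
is a super-solution of u_t = J∗u − u + f(u) on ℝ^N × [t₀,∞). -/
theorem stmt_14 {k : ℕ}
    (J : ℝ × (Fin k → ℝ) → ℝ) (hJpos : ∀ x, 0 ≤ J x)
    (hJC1 : ContDiff ℝ 1 J) (hJsupp : HasCompactSupport J)
    (hJint : ∫ x, J x = 1)
    (J1 : ℝ → ℝ) (hJ1 : ∀ z, J1 z = ∫ y' : Fin k → ℝ, J (z, y'))
    (f f' : ℝ → ℝ) (hf : ∀ s, HasDerivAt f (f' s) s)
    (hfext0 : ∀ s ≤ (0:ℝ), f s = f' 0 * s)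
    (hfext1 : ∀ s ≥ (1:ℝ), f s = f' 1 * (s - 1))
    (phi phi' : ℝ → ℝ) (hphi : ∀ z, HasDerivAt phi (phi' z) z)
    (c : ℝ) (hc : 0 < c)
    (hwave : ∀ z, (∫ y, J1 (z - y) * (phi y - phi z)) - c * phi' z + f (phi z) = 0)
    (hphi0 : Filter.Tendsto phi Filter.atBot (nhds 0))
    (hphi1 : Filter.Tendsto phi Filter.atTop (nhds 1))
    (hphirange : ∀ z, 0 < phi z ∧ phi z < 1)
    (omega eta : ℝ) (homega : 0 < omega) (heta : 0 < eta)
    (hf'neg : ∀ s ∈ Icc (-2*eta) (2*eta) ∪ Icc (1-2*eta) (1+2*eta), f' s ≤ -omega)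
    (A : ℝ) (hA : 0 < A)
    (hAleft : ∀ z ≤ -A, phi z ≤ eta/2) (hAright : ∀ z ≥ A, phi z ≥ 1 - eta/2)
    (delta : ℝ) (hdelta : IsLeast (phi' '' Icc (-A) A) delta) (hdeltapos : 0 < delta)
    (Kf : ℝ) (hKfpos : 0 < Kf) (hKf : ∀ s, |f' s| ≤ Kf)
    (t0 eps : ℝ) (heps : 0 < eps) (heps' : eps < eta)
    (ubar : ℝ × (Fin k → ℝ) → ℝ → ℝ)
    (hubar : ∀ x t, ubar x t =
      phi (x.1 + c*t + 2*eps*Kf*delta⁻¹*omega⁻¹*(1 - Real.exp (-omega*(t - t0))))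
        + eps * Real.exp (-omega*(t - t0))) :
    ∀ x : ℝ × (Fin k → ℝ), ∀ t ≥ t0,
      phi' (x.1 + c*t + 2*eps*Kf*delta⁻¹*omega⁻¹*(1 - Real.exp (-omega*(t - t0))))
          * (c + 2*eps*Kf*delta⁻¹ * Real.exp (-omega*(t - t0)))
        - eps*omega*Real.exp (-omega*(t - t0))
      ≥ (∫ y, J (x - y) * (ubar y t - ubar x t)) + f (ubar x t) :=
  stmt_14_general J hJpos hJC1 hJsupp hJint J1 hJ1 f f' hf hfext0 hfext1 phi phi' hphi c hc hwave
    hphi0 hphi1 hphirange omega eta homega hf'neg A hAleft hAright delta hdelta hdeltapos Kf hKf t0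
    eps heps heps' ubar hubar
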